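/- arXiv:1904.06573 — 4 statements merged into one kernel-verified Lean document; each statement's English description precedes it below -/
import Mathlib

section
/- Define p(n) = Σ_λ (-1)^λ · C(n, ⌊(n+5λ)/2⌋), where the sum is over all integers λ (only finitely many terms are nonzero). Then p(n) = p(n-1) + p(n-2) for all n ≥ 1, with p(-1) = 0 and p(0) = 1. -/
/-!
Expanding `C(n, ⌊m/2⌋)` twice by Pascal's rule gives
`C(n, ⌊m/2⌋) = C(n-1, ⌊(m-1)/2⌋) + C(n-2, ⌊(m-2)/2⌋) + E(m) + E(m-5)`,
where `E(m) = C(n-2, m/2)` for even `m` and `0` for odd `m`. Taking `m = n + 5λ`, the error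
terms are `E(n+5λ) + E(n+5(λ-1))`, which cancel in the sum with alternating signs `(-1)^λ`.
-/

/-- Binomial coefficient with integer arguments, zero out of range. -/
def C (n k : ℤ) : ℤ := if 0 ≤ k ∧ k ≤ n then (n.toNat.choose k.toNat : ℤ) else 0

/-- `p n = Σ_λ (-1)^λ C(n, ⌊(n+5λ)/2⌋)`, the sum over all integers `λ`
(only finitely many terms are nonzero). -/
noncomputable def p (n : ℤ) : ℤ :=
  ∑ᶠ l : ℤ, (-1 : ℤ) ^ l.natAbs * C n ((n + 5 * l).fdiv 2)

open Function

lemma C_eq_zero_of_out_of_range {n k : ℤ} (h : ¬(0 ≤ k ∧ k ≤ n)) : C n k = 0 := if_neg h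

lemma C_natCast (n k : ℕ) : C n k = n.choose k := by
  unfold C
  split_ifs with h
  · simp
  · rw [Nat.choose_eq_zero_of_lt (by omega), Nat.cast_zero]

lemma C_pascal {m : ℤ} (hm : 1 ≤ m) (k : ℤ) : C m k = C (m - 1) (k - 1) + C (m - 1) k := by
  obtain ⟨n, rfl⟩ : ∃ n : ℕ, m = n + 1 := ⟨(m - 1).toNat, by omega⟩
  rw [add_sub_cancel_right]
  rcases lt_or_ge k 0 with hk | hk
  · have hzero : ∀ j ≤ k, ∀ m, C m j = 0 := fun j hj m =>
      C_eq_zero_of_out_of_range (by omega)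
    rw [hzero k le_rfl, hzero (k - 1) (by omega), hzero k le_rfl, add_zero]
  lift k to ℕ using hk
  have hcast : (n : ℤ) + 1 = ((n + 1 : ℕ) : ℤ) := by push_cast; rfl
  cases k with
  | zero => rw [hcast, C_natCast, C_natCast]; simp [C_eq_zero_of_out_of_range]
  | succ k =>
    rw [hcast, show ((k + 1 : ℕ) : ℤ) - 1 = k by push_cast; ring, C_natCast, C_natCast,
      C_natCast, Nat.choose_succ_succ', Nat.cast_add]

def evenC (n m : ℤ) : ℤ := if Even m then C n (m / 2) else 0

lemma C_fdiv_two_eq {n : ℤ} (hn : 2 ≤ n) (m : ℤ) :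
    C n (m.fdiv 2) = C (n - 1) ((m - 1).fdiv 2) + C (n - 2) ((m - 2).fdiv 2)
      + evenC (n - 2) m + evenC (n - 2) (m - 5) := by
  simp only [evenC, Int.fdiv_eq_ediv_of_nonneg _ zero_le_two]
  have hpascal₁ := C_pascal (by omega : 1 ≤ n)
  have hpascal₂ := C_pascal (by omega : 1 ≤ n - 1)
  rw [show n - 1 - 1 = n - 2 by ring] at hpascal₂
  obtain ⟨a, rfl | rfl⟩ := Int.even_or_odd' m
  · have hodd : ¬Even (2 * a - 5) := by rw [Int.not_even_iff_odd]; exact ⟨a - 3, by ring⟩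
    rw [if_pos (even_two_mul a), if_neg hodd, show 2 * a / 2 = a by omega,
      show (2 * a - 1) / 2 = a - 1 by omega, show (2 * a - 2) / 2 = a - 1 by omega,
      hpascal₁ a, hpascal₂ a]
    ring
  · have hodd : ¬Even (2 * a + 1) := by rw [Int.not_even_iff_odd]; exact odd_two_mul_add_one a
    have heven : Even (2 * a + 1 - 5) := ⟨a - 2, by ring⟩
    rw [if_neg hodd, if_pos heven, show (2 * a + 1) / 2 = a by omega,
      show (2 * a + 1 - 1) / 2 = a by omega, show (2 * a + 1 - 2) / 2 = a - 1 by omega,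
      show (2 * a + 1 - 5) / 2 = a - 2 by omega, hpascal₁ a, hpascal₂ (a - 1),
      show a - 1 - 1 = a - 2 by ring]
    ring

lemma neg_one_pow_natAbs_add_one {R : Type*} [Monoid R] [HasDistribNeg R] (l : ℤ) :
    (-1 : R) ^ (l + 1).natAbs = -(-1) ^ l.natAbs := by
  rcases Int.even_or_odd l with h | h
  · rw [h.natAbs.neg_one_pow, (h.add_one.natAbs).neg_one_pow]
  · rw [h.natAbs.neg_one_pow, (h.add_one.natAbs).neg_one_pow, neg_neg]

lemma finsum_neg_one_pow_mul_add_comp_sub_one {R : Type*} [CommRing R] {f : ℤ → R}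
    (hf : (support f).Finite) : ∑ᶠ l : ℤ, (-1 : R) ^ l.natAbs * (f l + f (l - 1)) = 0 := by
  have hf' : (support fun l => f (l - 1)).Finite := hf.preimage sub_left_injective.injOn
  have hshift : ∑ᶠ l : ℤ, (-1 : R) ^ l.natAbs * f (l - 1)
      = -∑ᶠ l : ℤ, (-1 : R) ^ l.natAbs * f l := by
    rw [← finsum_comp_equiv (Equiv.addRight 1), ← finsum_neg_distrib]
    simp [neg_one_pow_natAbs_add_one]
  simp only [mul_add]
  rw [finsum_add_distrib (hf.subset (support_mul_subset_right _ _))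
    (hf'.subset (support_mul_subset_right _ _)), hshift, add_neg_cancel]

lemma finite_support_C_fdiv_two (n b : ℤ) :
    (support fun l : ℤ => C n ((b + 5 * l).fdiv 2)).Finite := by
  refine (Set.finite_Icc (-(b.natAbs : ℤ)) (b.natAbs + n.natAbs + 1)).subset fun l hl => ?_
  by_contra hout
  rw [Set.mem_Icc] at hout
  exact hl (C_eq_zero_of_out_of_range (by rw [Int.fdiv_eq_ediv_of_nonneg _ zero_le_two]; omega))

lemma finite_support_evenC (n b : ℤ) :
    (support fun l : ℤ => evenC n (b + 5 * l)).Finite := by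
  refine (finite_support_C_fdiv_two n b).subset fun l hl => ?_
  rw [mem_support, evenC] at hl
  split_ifs at hl
  · rwa [mem_support, Int.fdiv_eq_ediv_of_nonneg _ zero_le_two]
  · exact absurd rfl hl

lemma p_eq_zero_of_neg {n : ℤ} (hn : n < 0) : p n = 0 :=
  finsum_eq_zero_of_forall_eq_zero fun l => by rw [C_eq_zero_of_out_of_range (by omega), mul_zero]

lemma p_eq_one_of_nonneg_of_le_one {n : ℤ} (h0 : 0 ≤ n) (h1 : n ≤ 1) : p n = 1 := by
  unfold p
  rw [finsum_eq_single _ 0 fun l hl => ?_]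
  · rw [Int.fdiv_eq_ediv_of_nonneg _ zero_le_two, show (n + 5 * 0) / 2 = 0 by omega]
    simp [C, h0]
  · rw [C_eq_zero_of_out_of_range (by rw [Int.fdiv_eq_ediv_of_nonneg _ zero_le_two]; omega),
      mul_zero]

lemma p_eq_add_of_two_le {n : ℤ} (hn : 2 ≤ n) : p n = p (n - 1) + p (n - 2) := by
  set f : ℤ → ℤ := fun l => evenC (n - 2) (n + 5 * l) with hf_def
  have hsplit (l : ℤ) : (-1 : ℤ) ^ l.natAbs * C n ((n + 5 * l).fdiv 2) =
      ((-1) ^ l.natAbs * C (n - 1) ((n - 1 + 5 * l).fdiv 2)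
        + (-1) ^ l.natAbs * C (n - 2) ((n - 2 + 5 * l).fdiv 2))
      + (-1) ^ l.natAbs * (f l + f (l - 1)) := by
    simp only [hf_def]
    rw [C_fdiv_two_eq hn, show n + 5 * l - 1 = n - 1 + 5 * l by ring,
      show n + 5 * l - 2 = n - 2 + 5 * l by ring, show n + 5 * (l - 1) = n + 5 * l - 5 by ring]
    ring
  have hf : (support f).Finite := finite_support_evenC _ _
  have hterm (m : ℤ) := (finite_support_C_fdiv_two m m).subset
    (support_mul_subset_right (fun l : ℤ => (-1 : ℤ) ^ l.natAbs) _)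
  have hrest : (support fun l : ℤ => (-1 : ℤ) ^ l.natAbs * (f l + f (l - 1))).Finite :=
    (hf.union (hf.preimage sub_left_injective.injOn)).subset
      ((support_mul_subset_right _ _).trans (support_add _ _))
  unfold p
  rw [finsum_congr hsplit, finsum_add_distrib (((hterm _).union (hterm _)).subset
    (support_add _ _)) hrest, finsum_add_distrib (hterm _) (hterm _),
    finsum_neg_one_pow_mul_add_comp_sub_one hf, add_zero]

theorem gs1_amateur :
    (∀ n : ℤ, 1 ≤ n → p n = p (n - 1) + p (n - 2)) ∧ p (-1) = 0 ∧ p 0 = 1 := by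
  refine ⟨fun n hn => ?_, p_eq_zero_of_neg (by norm_num),
    p_eq_one_of_nonneg_of_le_one le_rfl zero_le_one⟩
  rcases hn.eq_or_lt with rfl | hn
  · rw [p_eq_one_of_nonneg_of_le_one zero_le_one le_rfl, sub_self,
      p_eq_one_of_nonneg_of_le_one le_rfl zero_le_one, p_eq_zero_of_neg (by norm_num), add_zero]
  · exact p_eq_add_of_two_le hn
end

section
/- Define p(n) = Σ_λ (-1)^λ · C(n, ⌊(n+5λ)/2⌋) over all integers λ. Then p(n) equals the Fibonacci number F(n+1) for all n ≥ 0 (with F(1) = F(2) = 1). -/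
theorem finsum_sub_sub_shift_eq_zero {α M : Type*} [AddGroup α] [AddCommGroup M] {f : α → M}
    (hf : f.HasFiniteSupport) (c : α) : ∑ᶠ a, (f a - f (a - c)) = 0 := by
  rw [finsum_sub_distrib hf (hf.fun_comp_of_injective (sub_left_injective (b := c))), sub_eq_zero]
  exact (finsum_comp_equiv (Equiv.subRight c)).symm

theorem neg_one_pow_natAbs_sub_one (l : ℤ) :
    (-1 : ℤ) ^ (l - 1).natAbs = -(-1) ^ l.natAbs := by
  rw [← Int.coe_negOnePow, ← Int.coe_negOnePow, Int.negOnePow_sub, Int.negOnePow_one]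
  simp

theorem C_eq_zero {n k : ℤ} (h : k < 0 ∨ n < k) : C n k = 0 :=
  if_neg (by omega)

theorem C_natCast_s3 (m j : ℕ) : C m j = m.choose j := by
  unfold C
  split_ifs with h
  · simp
  · rw [Nat.choose_eq_zero_of_lt (by omega), Nat.cast_zero]

theorem C_add_one {n : ℤ} (hn : 0 ≤ n) (k : ℤ) : C (n + 1) k = C n k + C n (k - 1) := by
  obtain ⟨m, rfl⟩ := Int.eq_ofNat_of_zero_le hn
  rcases k with (_ | j) | j
  · simp [C, Int.add_nonneg]
  · have h := C_natCast_s3 (m + 1) (j + 1)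
    have h' := C_natCast_s3 m (j + 1)
    push_cast at h h'
    simp [h, h', C_natCast_s3, Nat.choose_succ_succ', add_comm]
  · simp [C_eq_zero]

def pSummand (n l : ℤ) : ℤ := (-1) ^ l.natAbs * C n ((n + 5 * l) / 2)

theorem p_eq_finsum_pSummand (n : ℤ) : p n = ∑ᶠ l, pSummand n l := by
  simp only [p, pSummand, Int.fdiv_eq_ediv_of_nonneg _ zero_le_two]

theorem hasFiniteSupport_pSummand (n : ℤ) : (pSummand n).HasFiniteSupport := by
  refine (Set.finite_Icc (-n) n).subset fun l hl ↦ ?_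
  by_contra hl'
  exact hl (by rw [pSummand, C_eq_zero (by simp only [Set.mem_Icc] at hl'; omega), mul_zero])

def pCorrection (n l : ℤ) : ℤ :=
  if (n + l) % 2 = 1 then (-1) ^ l.natAbs * C (n - 1) ((n + 5 * l + 1) / 2) else 0

theorem hasFiniteSupport_pCorrection (n : ℤ) : (pCorrection n).HasFiniteSupport := by
  refine (Set.finite_Icc (-n) n).subset fun l hl ↦ ?_
  by_contra hl'
  refine hl ?_
  rw [pCorrection]
  split_ifs
  · rw [C_eq_zero (by simp only [Set.mem_Icc] at hl'; omega), mul_zero]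
  · rfl

theorem pSummand_add_one {n : ℤ} (hn : 1 ≤ n) (l : ℤ) :
    pSummand (n + 1) l =
      pSummand n l + pSummand (n - 1) l + (pCorrection n l - pCorrection n (l - 1)) := by
  have pascal₁ := C_add_one (n := n) (by omega)
  have pascal₂ := C_add_one (n := n - 1) (by omega)
  rw [sub_add_cancel] at pascal₂
  simp only [pSummand, pCorrection, neg_one_pow_natAbs_sub_one]
  set k := (n + 5 * l) / 2 with hk
  rcases Int.emod_two_eq_zero_or_one (n + 5 * l) with h | h
  · rw [if_neg (by omega), if_pos (by omega), show (n + 1 + 5 * l) / 2 = k by omega,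
      show (n - 1 + 5 * l) / 2 = k - 1 by omega, show (n + 5 * (l - 1) + 1) / 2 = k - 1 - 1 by omega,
      pascal₁, pascal₂ (k - 1)]
    ring
  · rw [if_pos (by omega), if_neg (by omega), show (n + 1 + 5 * l) / 2 = k + 1 by omega,
      show (n - 1 + 5 * l) / 2 = k by omega, show (n + 5 * l + 1) / 2 = k + 1 by omega,
      pascal₁, pascal₂ (k + 1), add_sub_cancel_right]
    ring

theorem p_add_one {n : ℤ} (hn : 1 ≤ n) : p (n + 1) = p n + p (n - 1) := by
  have hS := hasFiniteSupport_pSummand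
  have hW := hasFiniteSupport_pCorrection n
  simp only [p_eq_finsum_pSummand, pSummand_add_one hn]
  rw [finsum_add_distrib, finsum_add_distrib (hS n) (hS (n - 1)), finsum_sub_sub_shift_eq_zero hW,
    add_zero]
  · exact (hS n).add (hS (n - 1))
  · exact hW.sub (hW.fun_comp_of_injective sub_left_injective)

theorem p_eq_one {n : ℤ} (h₀ : 0 ≤ n) (h₁ : n ≤ 1) : p n = 1 := by
  rw [p_eq_finsum_pSummand, finsum_eq_single _ 0 fun l hl ↦ by
    rw [pSummand, C_eq_zero (by omega), mul_zero]]
  rw [pSummand, show (n + 5 * 0) / 2 = 0 by omega, C, if_pos (by omega)]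
  simp

theorem p_natCast (m : ℕ) : p m = Nat.fib (m + 1) := by
  induction m using Nat.twoStepInduction with
  | zero => simpa using p_eq_one le_rfl zero_le_one
  | one => simpa using p_eq_one zero_le_one le_rfl
  | more m ih₀ ih₁ =>
    have h := p_add_one (n := m + 1) (by omega)
    push_cast at ih₁ ⊢
    rw [add_assoc, one_add_one_eq_two] at h
    rw [h, add_sub_cancel_right, ih₀, ih₁, Nat.fib_add_two (n := m + 1), Nat.cast_add, add_comm]

theorem gs1_amateur_fib (n : ℤ) (hn : 0 ≤ n) :
    p n = (Nat.fib (n.toNat + 1) : ℤ) := by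
  obtain ⟨m, rfl⟩ := Int.eq_ofNat_of_zero_le hn
  simpa using p_natCast m
end

section
/- Let a(λ) = (5λ² - λ)/2 and define the polynomial P(n) = Σ_λ (-1)^λ · x^{a(λ)} · [n choose ⌊(n+5λ)/2⌋], the sum over all integers λ. Then P(n) = P(n-1) + x^{n-1}·P(n-2) for all n ≥ 1, with P(-1) = 0 and P(0) = 1. -/
open RatFunc in
/-- Gaussian binomial coefficient `[n choose k]_x`, as a rational function in `x`,
zero out of range.  (It is in fact a polynomial.) -/
noncomputable def gb (n k : ℤ) : RatFunc ℚ :=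
  if 0 ≤ k ∧ k ≤ n then
    (∏ i ∈ Finset.range k.toNat, ((X : RatFunc ℚ) ^ (n - i) - 1)) /
      (∏ i ∈ Finset.range k.toNat, ((X : RatFunc ℚ) ^ (i + 1) - 1))
  else 0

/-- `a(λ) = (5λ² - λ)/2`. -/
def a (l : ℤ) : ℤ := (5 * l ^ 2 - l) / 2

/-- `P(n) = Σ_λ (-1)^λ x^{a(λ)} [n choose ⌊(n+5λ)/2⌋]`, the sum over all integers `λ`. -/
noncomputable def P (n : ℤ) : RatFunc ℚ :=
  ∑ᶠ l : ℤ, (-1 : RatFunc ℚ) ^ l.natAbs * RatFunc.X ^ (a l) * gb n ((n + 5 * l).fdiv 2)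

open RatFunc Finset

lemma xpow_sub_one_ne {m : ℤ} (hm : 1 ≤ m) : (X : RatFunc ℚ) ^ m - 1 ≠ 0 := by
  lift m to ℕ using (by omega) with t
  rw [zpow_natCast]
  have h : (X : RatFunc ℚ) ^ t - 1
      = algebraMap (Polynomial ℚ) (RatFunc ℚ) (Polynomial.X ^ t - Polynomial.C 1) := by
    simp [RatFunc.algebraMap_X]
  rw [h]
  exact RatFunc.algebraMap_ne_zero (Polynomial.X_pow_sub_C_ne_zero (by omega) 1)
lemma xpow_sub_one_ne' {t : ℕ} (ht : 1 ≤ t) : (X : RatFunc ℚ) ^ t - 1 ≠ 0 := by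
  rw [← zpow_natCast]; exact xpow_sub_one_ne (by omega)
noncomputable def Np (n : ℤ) (t : ℕ) : RatFunc ℚ :=
  ∏ i ∈ Finset.range t, ((X : RatFunc ℚ) ^ (n - (i : ℤ)) - 1)
noncomputable def Dp (t : ℕ) : RatFunc ℚ :=
  ∏ i ∈ Finset.range t, ((X : RatFunc ℚ) ^ (i + 1) - 1)
lemma gb_pos {n k : ℤ} (h : 0 ≤ k ∧ k ≤ n) : gb n k = Np n k.toNat / Dp k.toNat := by
  rw [gb, if_pos h]; rfl
lemma gb_neg {n k : ℤ} (h : ¬(0 ≤ k ∧ k ≤ n)) : gb n k = 0 := by rw [gb, if_neg h]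
lemma Dp_ne (t : ℕ) : Dp t ≠ 0 := by
  rw [Dp]; exact Finset.prod_ne_zero_iff.mpr fun i _ => xpow_sub_one_ne' (by omega)
lemma Np_ne {n : ℤ} {t : ℕ} (h : (t : ℤ) ≤ n) : Np n t ≠ 0 := by
  rw [Np]
  refine Finset.prod_ne_zero_iff.mpr fun i hi => xpow_sub_one_ne ?_
  have := Finset.mem_range.mp hi; omega
lemma Np_succ_left (n : ℤ) (t : ℕ) :
    Np n (t + 1) = ((X : RatFunc ℚ) ^ n - 1) * Np (n - 1) t := by
  simp only [Np, Finset.prod_range_succ']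
  rw [mul_comm]
  congr 1
  · norm_num
  · exact Finset.prod_congr rfl fun i _ => by congr 2; push_cast; ring
lemma Np_succ_right (n : ℤ) (t : ℕ) :
    Np n (t + 1) = Np n t * ((X : RatFunc ℚ) ^ (n - (t : ℤ)) - 1) :=
  Finset.prod_range_succ _ _
lemma Dp_succ (t : ℕ) : Dp (t + 1) = Dp t * ((X : RatFunc ℚ) ^ (t + 1) - 1) :=
  Finset.prod_range_succ _ _
lemma npow_eq_zpow {t : ℕ} {k : ℤ} (h : (t : ℤ) = k) :
    (X : RatFunc ℚ) ^ t = (X : RatFunc ℚ) ^ k := by rw [← zpow_natCast, h]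
lemma gb_succ_succ {n k : ℤ} (h1 : 1 ≤ k) (h2 : k ≤ n) :
    gb n k = (((X : RatFunc ℚ) ^ n - 1) / ((X : RatFunc ℚ) ^ k - 1)) * gb (n - 1) (k - 1) := by
  have ht : k.toNat = (k - 1).toNat + 1 := by omega
  have hx : (X : RatFunc ℚ) ^ ((k - 1).toNat + 1) = (X : RatFunc ℚ) ^ k :=
    npow_eq_zpow (by omega)
  rw [gb_pos ⟨by omega, h2⟩, gb_pos ⟨by omega, by omega⟩, ht, Np_succ_left, Dp_succ, hx,
    div_mul_div_comm, mul_comm (Dp (k - 1).toNat)]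
lemma gb_top {n k : ℤ} (h1 : 0 ≤ k) (h2 : k ≤ n - 1) :
    gb n k = (((X : RatFunc ℚ) ^ n - 1) / ((X : RatFunc ℚ) ^ (n - k) - 1)) * gb (n - 1) k := by
  have htz : (k.toNat : ℤ) = k := by omega
  have key : Np n k.toNat * ((X : RatFunc ℚ) ^ (n - k) - 1)
      = ((X : RatFunc ℚ) ^ n - 1) * Np (n - 1) k.toNat := by
    have h := (Np_succ_right n k.toNat).symm.trans (Np_succ_left n k.toNat)
    rwa [htz] at h
  rw [gb_pos ⟨h1, by omega⟩, gb_pos ⟨h1, by omega⟩, div_mul_div_comm,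
    div_eq_div_iff (Dp_ne _) (mul_ne_zero (xpow_sub_one_ne (by omega)) (Dp_ne _))]
  linear_combination Dp k.toNat * key
lemma gb_step {m k : ℤ} (h1 : 1 ≤ k) (h2 : k ≤ m) :
    gb m k = (((X : RatFunc ℚ) ^ (m - k + 1) - 1) / ((X : RatFunc ℚ) ^ k - 1)) * gb m (k - 1) := by
  have ht : k.toNat = (k - 1).toNat + 1 := by omega
  have hmt : m - ((k - 1).toNat : ℤ) = m - k + 1 := by omega
  have hx : (X : RatFunc ℚ) ^ ((k - 1).toNat + 1) = (X : RatFunc ℚ) ^ k :=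
    npow_eq_zpow (by omega)
  rw [gb_pos ⟨by omega, h2⟩, gb_pos ⟨by omega, by omega⟩, ht, Np_succ_right, Dp_succ, hx, hmt,
    div_mul_div_comm, mul_comm (Dp (k - 1).toNat), mul_comm (Np m (k - 1).toNat)]

lemma gb_zero {n : ℤ} (h : 0 ≤ n) : gb n 0 = 1 := by
  rw [gb_pos ⟨le_refl 0, h⟩]; simp [Np, Dp]

lemma gb_diag {n : ℤ} (h : 0 ≤ n) : gb n n = 1 := by
  rw [gb_pos ⟨h, le_refl n⟩]
  have hD : Dp n.toNat = ∏ i ∈ Finset.range n.toNat, ((X : RatFunc ℚ) ^ ((i : ℤ) + 1) - 1) := by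
    refine Finset.prod_congr rfl fun i _ => ?_
    rw [npow_eq_zpow (k := (i : ℤ) + 1) (by push_cast; ring)]
  have hN : Np n n.toNat = Dp n.toNat := by
    rw [hD, Np, ← Finset.prod_range_reflect]
    refine Finset.prod_congr rfl fun j hj => ?_
    have hj' := Finset.mem_range.mp hj
    have he : n - ((n.toNat - 1 - j : ℕ) : ℤ) = (j : ℤ) + 1 := by omega
    rw [he]
  rw [hN, div_self (Dp_ne _)]

lemma pascalB {n : ℤ} (hn : 1 ≤ n) (k : ℤ) :
    gb n k = gb (n - 1) (k - 1) + (X : RatFunc ℚ) ^ k * gb (n - 1) k := by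
  rcases lt_trichotomy k 0 with hk | hk | hk
  · rw [gb_neg (by omega), gb_neg (by omega), gb_neg (by omega)]; ring
  · subst hk
    rw [gb_zero (n := n) (by omega), gb_neg (n := n - 1) (k := 0 - 1) (by omega),
      gb_zero (n := n - 1) (by omega)]
    norm_num
  · rcases lt_trichotomy k n with hkn | hkn | hkn
    · have hne : (X : RatFunc ℚ) ^ k - 1 ≠ 0 := xpow_sub_one_ne hk
      have hzz : (X : RatFunc ℚ) ^ k * (X : RatFunc ℚ) ^ (n - k) = (X : RatFunc ℚ) ^ n := by
        rw [← zpow_add₀ RatFunc.X_ne_zero]; congr 1; ring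
      have h2 : gb (n - 1) k
          = (((X : RatFunc ℚ) ^ (n - k) - 1) / ((X : RatFunc ℚ) ^ k - 1)) * gb (n - 1) (k - 1) := by
        have := gb_step (m := n - 1) hk (by omega)
        rwa [show n - 1 - k + 1 = n - k by ring] at this
      rw [gb_succ_succ hk hkn.le, h2]
      field_simp
      linear_combination (-gb (n - 1) (k - 1)) * hzz
    · subst hkn
      rw [gb_diag (n := k) (by omega), gb_diag (n := k - 1) (by omega),
        gb_neg (n := k - 1) (k := k) (by omega)]
      ring
    · rw [gb_neg (by omega), gb_neg (by omega), gb_neg (by omega)]; ring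

lemma pascalA {n : ℤ} (hn : 1 ≤ n) (k : ℤ) :
    gb n k = gb (n - 1) k + (X : RatFunc ℚ) ^ (n - k) * gb (n - 1) (k - 1) := by
  rcases lt_trichotomy k 0 with hk | hk | hk
  · rw [gb_neg (by omega), gb_neg (by omega), gb_neg (by omega)]; ring
  · subst hk
    rw [gb_zero (n := n) (by omega), gb_zero (n := n - 1) (by omega),
      gb_neg (n := n - 1) (k := 0 - 1) (by omega)]
    norm_num
  · rcases lt_trichotomy k n with hkn | hkn | hkn
    · have hne : (X : RatFunc ℚ) ^ k - 1 ≠ 0 := xpow_sub_one_ne hk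
      have hne2 : (X : RatFunc ℚ) ^ (n - k) - 1 ≠ 0 := xpow_sub_one_ne (by omega)
      have hzz : (X : RatFunc ℚ) ^ (n - k) * (X : RatFunc ℚ) ^ k = (X : RatFunc ℚ) ^ n := by
        rw [← zpow_add₀ RatFunc.X_ne_zero]; congr 1; ring
      have h2 : gb (n - 1) k
          = (((X : RatFunc ℚ) ^ (n - k) - 1) / ((X : RatFunc ℚ) ^ k - 1)) * gb (n - 1) (k - 1) := by
        have := gb_step (m := n - 1) hk (by omega)
        rwa [show n - 1 - k + 1 = n - k by ring] at this
      rw [gb_succ_succ hk hkn.le, h2]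
      field_simp
      linear_combination (-gb (n - 1) (k - 1)) * hzz
    · subst hkn
      rw [gb_diag (n := k) (by omega), gb_diag (n := k - 1) (by omega),
        gb_neg (n := k - 1) (k := k) (by omega), sub_self, zpow_zero]
      ring
    · rw [gb_neg (by omega), gb_neg (by omega), gb_neg (by omega)]; ring

lemma identA {n : ℤ} (hn : 2 ≤ n) (k : ℤ) :
    gb n k = gb (n - 1) (k - 1) + (X : RatFunc ℚ) ^ (n - 1) * gb (n - 2) (k - 1)
      + (X : RatFunc ℚ) ^ k * gb (n - 2) k := by
  have h1 := pascalB (show (1:ℤ) ≤ n by omega) k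
  have h2 := pascalA (show (1:ℤ) ≤ n - 1 by omega) k
  rw [show n - 1 - 1 = n - 2 by ring] at h2
  have hzz : (X : RatFunc ℚ) ^ k * (X : RatFunc ℚ) ^ (n - 1 - k) = (X : RatFunc ℚ) ^ (n - 1) := by
    rw [← zpow_add₀ RatFunc.X_ne_zero]; congr 1; ring
  linear_combination h1 + (X : RatFunc ℚ) ^ k * h2 + gb (n - 2) (k - 1) * hzz

lemma identB {n : ℤ} (hn : 2 ≤ n) (k : ℤ) :
    gb n k = gb (n - 1) k + (X : RatFunc ℚ) ^ (n - 1) * gb (n - 2) (k - 1)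
      + (X : RatFunc ℚ) ^ (n - k) * gb (n - 2) (k - 2) := by
  have h1 := pascalA (show (1:ℤ) ≤ n by omega) k
  have h2 := pascalB (show (1:ℤ) ≤ n - 1 by omega) (k - 1)
  rw [show n - 1 - 1 = n - 2 by ring, show k - 1 - 1 = k - 2 by ring] at h2
  have hzz : (X : RatFunc ℚ) ^ (n - k) * (X : RatFunc ℚ) ^ (k - 1)
      = (X : RatFunc ℚ) ^ (n - 1) := by
    rw [← zpow_add₀ RatFunc.X_ne_zero]; congr 1; ring
  linear_combination h1 + (X : RatFunc ℚ) ^ (n - k) * h2 + gb (n - 2) (k - 1) * hzz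

lemma two_dvd_al (l : ℤ) : 2 ∣ 5 * l ^ 2 - l := by
  rcases Int.even_or_odd l with ⟨m, rfl⟩ | ⟨m, rfl⟩
  · exact ⟨10 * m ^ 2 - m, by ring⟩
  · exact ⟨10 * m ^ 2 + 9 * m + 2, by ring⟩

lemma two_mul_a (l : ℤ) : 2 * a l = 5 * l ^ 2 - l := by
  have h := Int.ediv_mul_cancel (two_dvd_al l)
  rw [a]; linarith

lemma a_sub_one (l : ℤ) : a (l - 1) = a l + 3 - 5 * l := by
  have h1 := two_mul_a l
  have h2 := two_mul_a (l - 1)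
  have h3 : 5 * (l - 1) ^ 2 - (l - 1) = 5 * l ^ 2 - l - 10 * l + 6 := by ring
  linarith

lemma eps_sub_one (l : ℤ) :
    ((-1 : RatFunc ℚ)) ^ (l - 1).natAbs = -((-1 : RatFunc ℚ)) ^ l.natAbs := by
  rcases Int.even_or_odd l with he | ho
  · have h1 : Even l.natAbs := Int.natAbs_even.mpr he
    have h2 : Odd (l - 1).natAbs := by
      rcases he with ⟨m, rfl⟩
      exact Int.natAbs_odd.mpr ⟨m - 1, by ring⟩
    rw [h1.neg_one_pow, h2.neg_one_pow]
  · have h1 : Odd l.natAbs := Int.natAbs_odd.mpr ho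
    have h2 : Even (l - 1).natAbs := by
      rcases ho with ⟨m, rfl⟩
      exact Int.natAbs_even.mpr ⟨m, by ring⟩
    rw [h1.neg_one_pow, h2.neg_one_pow, neg_neg]

lemma fdiv_two {u v : ℤ} (h : u = 2 * v ∨ u = 2 * v + 1) : u.fdiv 2 = v := by
  rw [Int.fdiv_eq_ediv_of_nonneg _ (by norm_num)]; omega

/-- The summand of `P`. -/
noncomputable def Tf (n l : ℤ) : RatFunc ℚ :=
  (-1 : RatFunc ℚ) ^ l.natAbs * RatFunc.X ^ (a l) * gb n ((n + 5 * l).fdiv 2)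

lemma P_eq (n : ℤ) : P n = ∑ᶠ l : ℤ, Tf n l := rfl

/-- The WZ-style certificate. -/
noncomputable def Sf (n l : ℤ) : RatFunc ℚ :=
  if Even (n + l) then
    (-1 : RatFunc ℚ) ^ l.natAbs * RatFunc.X ^ (a l + (n + 5 * l).fdiv 2)
      * gb (n - 2) ((n + 5 * l).fdiv 2)
  else 0

lemma key {n : ℤ} (hn : 2 ≤ n) (l : ℤ) :
    Tf n l = Tf (n - 1) l + (X : RatFunc ℚ) ^ (n - 1) * Tf (n - 2) l
      + (Sf n l - Sf n (l - 1)) := by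
  rcases Int.even_or_odd (n + 5 * l) with ⟨k, hk⟩ | ⟨k, hk⟩
  · -- n + 5l = 2k
    have e1 : (n + 5 * l).fdiv 2 = k := fdiv_two (by omega)
    have e2 : (n - 1 + 5 * l).fdiv 2 = k - 1 := fdiv_two (by omega)
    have e3 : (n - 2 + 5 * l).fdiv 2 = k - 1 := fdiv_two (by omega)
    have hev : Even (n + l) := Int.even_iff.mpr (by omega)
    have hodd : ¬ Even (n + (l - 1)) := by rw [Int.even_iff]; omega
    rw [Tf, Tf, Tf, Sf, if_pos hev, Sf, if_neg hodd, e1, e2, e3]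
    have hxa : (X : RatFunc ℚ) ^ (a l + k)
        = (X : RatFunc ℚ) ^ (a l) * (X : RatFunc ℚ) ^ k :=
      zpow_add₀ RatFunc.X_ne_zero _ _
    have hA := identA hn k
    linear_combination ((-1 : RatFunc ℚ)) ^ l.natAbs * (X : RatFunc ℚ) ^ (a l) * hA
      - ((-1 : RatFunc ℚ)) ^ l.natAbs * gb (n - 2) k * hxa
  · -- n + 5l = 2k + 1
    have e1 : (n + 5 * l).fdiv 2 = k := fdiv_two (by omega)
    have e2 : (n - 1 + 5 * l).fdiv 2 = k := fdiv_two (by omega)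
    have e3 : (n - 2 + 5 * l).fdiv 2 = k - 1 := fdiv_two (by omega)
    have e4 : (n + 5 * (l - 1)).fdiv 2 = k - 2 := fdiv_two (by omega)
    have hodd : ¬ Even (n + l) := by rw [Int.even_iff]; omega
    have hev : Even (n + (l - 1)) := Int.even_iff.mpr (by omega)
    rw [Tf, Tf, Tf, Sf, if_neg hodd, Sf, if_pos hev, e1, e2, e3, e4, eps_sub_one]
    have hexp : a (l - 1) + (k - 2) = a l + (n - k) := by
      have := a_sub_one l; omega
    have hxa : (X : RatFunc ℚ) ^ (a (l - 1) + (k - 2))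
        = (X : RatFunc ℚ) ^ (a l) * (X : RatFunc ℚ) ^ (n - k) := by
      rw [hexp]; exact zpow_add₀ RatFunc.X_ne_zero _ _
    have hB := identB hn k
    linear_combination ((-1 : RatFunc ℚ)) ^ l.natAbs * (X : RatFunc ℚ) ^ (a l) * hB
      - ((-1 : RatFunc ℚ)) ^ l.natAbs * gb (n - 2) (k - 2) * hxa

lemma Tf_supp (m : ℤ) : Function.support (Tf m) ⊆ Set.Icc (-m - 2) (m + 2) := by
  intro l hl
  have hgb : gb m ((m + 5 * l).fdiv 2) ≠ 0 := by
    intro h0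
    apply hl
    simp [Tf, h0]
  have hcond : 0 ≤ (m + 5 * l).fdiv 2 ∧ (m + 5 * l).fdiv 2 ≤ m := by
    by_contra hc; exact hgb (gb_neg hc)
  rw [Int.fdiv_eq_ediv_of_nonneg _ (by norm_num)] at hcond
  simp only [Set.mem_Icc]
  omega

lemma Tf_fin (m : ℤ) : (Function.support (Tf m)).Finite :=
  (Set.finite_Icc _ _).subset (Tf_supp m)

lemma Sf_fin (n : ℤ) : (Function.support (Sf n)).Finite := by
  refine (Set.finite_Icc (-n - 2) (n + 2)).subset ?_
  intro l hl
  have h1 : Sf n l ≠ 0 := hl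
  rw [Sf] at h1
  by_cases hev : Even (n + l)
  · rw [if_pos hev] at h1
    have hgb : gb (n - 2) ((n + 5 * l).fdiv 2) ≠ 0 := by
      intro h0; exact h1 (by simp [h0])
    have hcond : 0 ≤ (n + 5 * l).fdiv 2 ∧ (n + 5 * l).fdiv 2 ≤ n - 2 := by
      by_contra hc; exact hgb (gb_neg hc)
    rw [Int.fdiv_eq_ediv_of_nonneg _ (by norm_num)] at hcond
    simp only [Set.mem_Icc]
    omega
  · exact absurd (if_neg hev) h1

lemma Sf_fin' (n : ℤ) : (Function.support fun l => Sf n (l - 1)).Finite := by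
  refine ((Sf_fin n).image fun t => t + 1).subset ?_
  intro l hl
  exact ⟨l - 1, hl, by ring⟩

lemma P_neg_one : P (-1) = 0 := by
  rw [P_eq]
  have h : ∀ l : ℤ, Tf (-1) l = 0 := by
    intro l
    rw [Tf, gb_neg (by omega), mul_zero]
  rw [finsum_congr h, finsum_zero]

lemma P_zero : P 0 = 1 := by
  rw [P_eq, finsum_eq_single _ 0]
  · have e1 : ((0 : ℤ) + 5 * 0).fdiv 2 = 0 := fdiv_two (by omega)
    have e2 : a 0 = 0 := rfl
    rw [Tf, e1, e2, gb_zero le_rfl]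
    norm_num
  · intro l hl
    have e : (0 + 5 * l).fdiv 2 = (0 + 5 * l) / 2 := Int.fdiv_eq_ediv_of_nonneg _ (by norm_num)
    rw [Tf, gb_neg (by rw [e]; omega), mul_zero]

lemma P_one : P 1 = 1 := by
  rw [P_eq, finsum_eq_single _ 0]
  · have e1 : ((1 : ℤ) + 5 * 0).fdiv 2 = 0 := fdiv_two (by omega)
    have e2 : a 0 = 0 := rfl
    rw [Tf, e1, e2, gb_zero (by norm_num)]
    norm_num
  · intro l hl
    have e : (1 + 5 * l).fdiv 2 = (1 + 5 * l) / 2 := Int.fdiv_eq_ediv_of_nonneg _ (by norm_num)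
    rw [Tf, gb_neg (by rw [e]; omega), mul_zero]

lemma P_rec {n : ℤ} (hn : 2 ≤ n) :
    P n = P (n - 1) + (X : RatFunc ℚ) ^ (n - 1) * P (n - 2) := by
  have hfinX : (Function.support fun l => (X : RatFunc ℚ) ^ (n - 1) * Tf (n - 2) l).Finite := by
    refine (Tf_fin (n - 2)).subset ?_
    intro l hl
    intro h0
    exact hl (by simp [h0])
  have hfinSS : (Function.support fun l => Sf n l - Sf n (l - 1)).Finite := by
    refine ((Sf_fin n).union (Sf_fin' n)).subset ?_
    intro l hl
    by_contra hc
    simp only [Set.mem_union, Function.mem_support, not_or, not_not] at hc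
    exact hl (by simp only [hc.1, hc.2, sub_zero])
  have hfin2 : (Function.support fun l =>
      (X : RatFunc ℚ) ^ (n - 1) * Tf (n - 2) l + (Sf n l - Sf n (l - 1))).Finite := by
    refine (hfinX.union hfinSS).subset ?_
    intro l hl
    by_contra hc
    simp only [Set.mem_union, Function.mem_support, not_or, not_not] at hc
    exact hl (by simp only [hc.1, hc.2, add_zero])
  have step1 : P n = ∑ᶠ l : ℤ, (Tf (n - 1) l
      + ((X : RatFunc ℚ) ^ (n - 1) * Tf (n - 2) l + (Sf n l - Sf n (l - 1)))) := by
    rw [P_eq]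
    refine finsum_congr fun l => ?_
    rw [key hn l]; ring
  rw [step1, finsum_add_distrib (Tf_fin (n - 1)) hfin2,
    finsum_add_distrib hfinX hfinSS,
    finsum_sub_distrib (Sf_fin n) (Sf_fin' n),
    ← mul_finsum _ _]
  have hre : ∑ᶠ l : ℤ, Sf n (l - 1) = ∑ᶠ l : ℤ, Sf n l :=
    finsum_comp_equiv (Equiv.subRight (1 : ℤ))
  rw [hre, sub_self, add_zero, ← P_eq, ← P_eq]

theorem gs1_pro :
    (∀ n : ℤ, 1 ≤ n → P n = P (n - 1) + (RatFunc.X : RatFunc ℚ) ^ (n - 1) * P (n - 2)) ∧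
      P (-1) = 0 ∧ P 0 = 1 := by
  refine ⟨fun n hn => ?_, P_neg_one, P_zero⟩
  rcases eq_or_lt_of_le hn with h1 | h1
  · rw [← h1]
    norm_num [P_one, P_zero, P_neg_one]
  · exact P_rec (by omega)
end

section
/- Let c(λ) = (3λ² - λ)/2 and define the polynomial R(n) = Σ_λ (-1)^λ · x^{c(λ)} · [n choose ⌊(n+3λ)/2⌋], the sum over all integers λ. Then R(n) = 1 for all n ≥ 0. -/
/-- `c(λ) = (3λ² - λ)/2`. -/
def c (l : ℤ) : ℤ := (3 * l ^ 2 - l) / 2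

/-- `R(n) = Σ_λ (-1)^λ x^{c(λ)} [n choose ⌊(n+3λ)/2⌋]`, the sum over all integers `λ`. -/
noncomputable def R (n : ℤ) : RatFunc ℚ :=
  ∑ᶠ l : ℤ, (-1 : RatFunc ℚ) ^ l.natAbs * RatFunc.X ^ (c l) * gb n ((n + 3 * l).fdiv 2)

namespace Slalom
lemma X_ne : (RatFunc.X : RatFunc ℚ) ≠ 0 := RatFunc.X_ne_zero

lemma Xp_ne (m : ℤ) (hm : 1 ≤ m) : (RatFunc.X : RatFunc ℚ) ^ m - 1 ≠ 0 := by
  lift m to ℕ using (by omega) with t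
  rw [zpow_natCast]
  have h2 : (RatFunc.X : RatFunc ℚ) ^ t - 1 = algebraMap (Polynomial ℚ) _ (Polynomial.X ^ t - 1) := by
    push_cast [map_sub, map_pow, RatFunc.algebraMap_X]; ring
  rw [h2]
  exact RatFunc.algebraMap_ne_zero
    (by simpa using Polynomial.X_pow_sub_C_ne_zero (by omega : 0 < t) (1:ℚ))

lemma Xp_ne' (t : ℕ) (ht : 1 ≤ t) : (RatFunc.X : RatFunc ℚ) ^ t - 1 ≠ 0 := by
  have := Xp_ne t (by exact_mod_cast ht)
  rwa [zpow_natCast] at this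

lemma den_ne (t : ℕ) : (∏ i ∈ Finset.range t, ((RatFunc.X : RatFunc ℚ) ^ (i + 1) - 1)) ≠ 0 :=
  Finset.prod_ne_zero_iff.2 fun i _ => Xp_ne' (i+1) (by omega)

lemma gb_out {n k : ℤ} (h : ¬(0 ≤ k ∧ k ≤ n)) : gb n k = 0 := by
  unfold gb; rw [if_neg h]

lemma gb_zero {n : ℤ} (hn : 0 ≤ n) : gb n 0 = 1 := by
  unfold gb; rw [if_pos ⟨le_refl 0, hn⟩]; simp

lemma gb_diag {n : ℤ} (hn : 0 ≤ n) : gb n n = 1 := by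
  unfold gb
  rw [if_pos ⟨hn, le_rfl⟩, div_eq_one_iff_eq (den_ne n.toNat)]
  rw [← Finset.prod_range_reflect (fun i => (RatFunc.X : RatFunc ℚ) ^ (i + 1) - 1) n.toNat]
  apply Finset.prod_congr rfl
  intro i hi
  simp only [Finset.mem_range] at hi
  rw [show n - (i:ℤ) = ((n.toNat - 1 - i + 1 : ℕ) : ℤ) by omega, zpow_natCast]

lemma gb_ratio {n k : ℤ} (h1 : 1 ≤ k) (h2 : k ≤ n) :
    gb n k * ((RatFunc.X : RatFunc ℚ) ^ k - 1)
      = gb n (k-1) * ((RatFunc.X : RatFunc ℚ) ^ (n+1-k) - 1) := by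
  unfold gb
  rw [if_pos ⟨by omega, h2⟩, if_pos ⟨by omega, by omega⟩]
  rw [show k.toNat = (k-1).toNat + 1 by omega, Finset.prod_range_succ, Finset.prod_range_succ]
  set s := (k-1).toNat with hs
  have e1 : n - (s:ℤ) = n + 1 - k := by omega
  have e2 : (RatFunc.X : RatFunc ℚ) ^ k = RatFunc.X ^ (s+1) := by
    rw [show k = ((s+1:ℕ):ℤ) by omega, zpow_natCast]
  rw [e1, e2]
  have hden := den_ne s
  have hlast : ((RatFunc.X : RatFunc ℚ) ^ (s+1) - 1) ≠ 0 := Xp_ne' (s+1) (by omega)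
  field_simp

lemma gb_succ {n k : ℤ} (h1 : 1 ≤ k) (h2 : k ≤ n) :
    gb (n+1) k * ((RatFunc.X : RatFunc ℚ) ^ (n+1-k) - 1)
      = gb n k * ((RatFunc.X : RatFunc ℚ) ^ (n+1) - 1) := by
  unfold gb
  rw [if_pos ⟨by omega, by omega⟩, if_pos ⟨by omega, h2⟩]
  set t := k.toNat with ht
  have key : (∏ i ∈ Finset.range t, ((RatFunc.X : RatFunc ℚ) ^ (n + 1 - i) - 1))
      * ((RatFunc.X : RatFunc ℚ) ^ (n+1-k) - 1)
      = ((RatFunc.X : RatFunc ℚ) ^ (n+1) - 1)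
        * ∏ i ∈ Finset.range t, ((RatFunc.X : RatFunc ℚ) ^ (n - i) - 1) := by
    have e1 := Finset.prod_range_succ (fun i : ℕ => (RatFunc.X : RatFunc ℚ) ^ (n + 1 - i) - 1) t
    have e2 := Finset.prod_range_succ' (fun i : ℕ => (RatFunc.X : RatFunc ℚ) ^ (n + 1 - i) - 1) t
    rw [show (n + 1 - (t:ℤ)) = n + 1 - k by omega] at e1
    rw [e1] at e2
    rw [e2]
    simp only [Nat.cast_zero, sub_zero, Nat.cast_add, Nat.cast_one]
    rw [mul_comm]
    congr 1
    apply Finset.prod_congr rfl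
    intro i _
    congr 2
    ring
  rw [div_mul_eq_mul_div, div_mul_eq_mul_div, key]
  ring

lemma pascal1 (n k : ℤ) (hn : 0 ≤ n) :
    gb (n+1) k = gb n (k-1) + (RatFunc.X : RatFunc ℚ) ^ k * gb n k := by
  rcases lt_or_ge k 0 with hneg | h0
  · rw [gb_out (by omega), gb_out (by omega), gb_out (by omega)]; ring
  rcases eq_or_lt_of_le h0 with rfl | h1
  · rw [gb_zero (by omega), gb_out (by omega), gb_zero hn]; simp
  rcases lt_or_ge n k with hbig | hkn
  · rcases (by omega : k = n + 1 ∨ n + 1 < k) with rfl | hbig2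
    · rw [gb_diag (by omega : (0:ℤ) ≤ n + 1), show n + 1 - 1 = n by ring, gb_diag hn,
        gb_out (by omega)]
      ring
    · rw [gb_out (by omega), gb_out (by omega), gb_out (by omega)]; ring
  · have A := gb_succ h1 hkn
    have B := gb_ratio h1 hkn
    have hx : (RatFunc.X : RatFunc ℚ) ^ k * RatFunc.X ^ (n+1-k) = RatFunc.X ^ (n+1) := by
      rw [← zpow_add₀ X_ne]; ring_nf
    apply mul_right_cancel₀ (Xp_ne (n+1-k) (by omega))
    linear_combination A + B - (gb n k) * hx

lemma pascal2 (n k : ℤ) (hn : 0 ≤ n) :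
    gb (n+1) k = (RatFunc.X : RatFunc ℚ) ^ (n+1-k) * gb n (k-1) + gb n k := by
  rcases lt_or_ge k 0 with hneg | h0
  · rw [gb_out (by omega), gb_out (by omega), gb_out (by omega)]; ring
  rcases eq_or_lt_of_le h0 with rfl | h1
  · rw [gb_zero (by omega), gb_out (by omega), gb_zero hn]; simp
  rcases lt_or_ge n k with hbig | hkn
  · rcases (by omega : k = n + 1 ∨ n + 1 < k) with rfl | hbig2
    · rw [gb_diag (by omega : (0:ℤ) ≤ n + 1), show n + 1 - 1 = n by ring, gb_diag hn,
        gb_out (by omega), show n + 1 - (n+1) = 0 by ring]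
      simp
    · rw [gb_out (by omega), gb_out (by omega), gb_out (by omega)]; ring
  · have A := gb_succ h1 hkn
    have B := gb_ratio h1 hkn
    have hx : (RatFunc.X : RatFunc ℚ) ^ k * RatFunc.X ^ (n+1-k) = RatFunc.X ^ (n+1) := by
      rw [← zpow_add₀ X_ne]; ring_nf
    apply mul_right_cancel₀ (Xp_ne (n+1-k) (by omega))
    linear_combination A + RatFunc.X ^ (n+1-k) * B - (gb n k) * hx



end Slalom

namespace Slalom

noncomputable def tm (n : ℤ) : ℤ → RatFunc ℚ := fun l =>
  (-1 : RatFunc ℚ) ^ l.natAbs * RatFunc.X ^ (c l) * gb n ((n + 3 * l).fdiv 2)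

noncomputable def gt' (n : ℤ) : ℤ → RatFunc ℚ := fun l =>
  if Even (n + 1 + l) then
    (-1 : RatFunc ℚ) ^ l.natAbs * RatFunc.X ^ (c l + (n + 1 + 3 * l).fdiv 2)
      * gb n ((n + 1 + 3 * l).fdiv 2)
  else 0

lemma two_mul_c (l : ℤ) : 2 * c l = 3 * l ^ 2 - l := by
  unfold c
  rcases Int.even_or_odd l with ⟨m,hm⟩|⟨m,hm⟩ <;> subst hm <;> ring_nf <;> omega

lemma sign_sub_one (l : ℤ) : ((-1 : RatFunc ℚ)) ^ (l-1).natAbs = -((-1 : RatFunc ℚ)) ^ l.natAbs := by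
  rcases Int.even_or_odd l with h|h
  · rw [(Int.natAbs_even.2 h).neg_one_pow,
      (Int.natAbs_odd.2 (by rcases h with ⟨m,hm⟩; exact ⟨m-1, by omega⟩)).neg_one_pow]
  · rw [(Int.natAbs_odd.2 h).neg_one_pow,
      (Int.natAbs_even.2 (by rcases h with ⟨m,hm⟩; exact ⟨m, by omega⟩)).neg_one_pow]
    ring

lemma fd2 (a : ℤ) : a.fdiv 2 = a / 2 := Int.fdiv_eq_ediv_of_nonneg _ (by norm_num)

lemma key (n : ℤ) (hn : 0 ≤ n) (l : ℤ) :
    tm (n+1) l = tm n l + (gt' n l - gt' n (l-1)) := by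
  unfold tm gt'
  simp only [fd2]
  rcases Int.even_or_odd (n + 1 + l) with he | ho
  · obtain ⟨m, hm⟩ := he
    rw [if_pos ⟨m, hm⟩, if_neg (fun h => by obtain ⟨m2, hm2⟩ := h; omega)]
    have h2k : n + 1 + 3 * l = 2 * ((n + 1 + 3 * l) / 2) := by omega
    set k : ℤ := (n + 1 + 3 * l) / 2 with hk
    have e2 : (n + 3 * l) / 2 = k - 1 := by omega
    rw [e2, pascal1 n k hn, zpow_add₀ X_ne]
    ring
  · obtain ⟨m, hm⟩ := ho
    rw [if_neg (fun h => by obtain ⟨m2, hm2⟩ := h; omega),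
      if_pos (show Even (n + 1 + (l - 1)) from ⟨m, by omega⟩)]
    have h2k : n + 1 + 3 * l = 2 * ((n + 1 + 3 * l) / 2) + 1 := by omega
    set k : ℤ := (n + 1 + 3 * l) / 2 with hk
    have e2 : (n + 3 * l) / 2 = k := by omega
    have e3 : (n + 1 + 3 * (l - 1)) / 2 = k - 1 := by omega
    rw [e2, e3]
    have hexp : c (l - 1) + (k - 1) = c l + (n + 1 - k) := by
      have t1 := two_mul_c l
      have t2 := two_mul_c (l - 1)
      have hsq : (l - 1) ^ 2 = l ^ 2 - 2 * l + 1 := by ring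
      linarith
    rw [pascal2 n k hn, sign_sub_one, hexp, zpow_add₀ X_ne]
    ring

lemma tm_supp (n : ℤ) (hn : 0 ≤ n) : (Function.support (tm n)).Finite := by
  apply Set.Finite.subset (Set.finite_Icc (-(n+1)) (n+1))
  intro l hl
  by_contra h
  apply hl
  unfold tm
  rw [gb_out, mul_zero]
  rw [fd2]
  simp only [Set.mem_Icc, not_and_or, not_le] at h
  omega

lemma gt'_supp (n : ℤ) (hn : 0 ≤ n) : (Function.support (gt' n)).Finite := by
  apply Set.Finite.subset (Set.finite_Icc (-(n+1)) (n+1))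
  intro l hl
  by_contra h
  apply hl
  unfold gt'
  split
  · rw [gb_out, mul_zero]
    rw [fd2]
    simp only [Set.mem_Icc, not_and_or, not_le] at h
    omega
  · rfl

lemma gt'_shift_supp (n : ℤ) (hn : 0 ≤ n) :
    (Function.support (fun l : ℤ => gt' n (l - 1))).Finite := by
  have heq : (Function.support fun l : ℤ => gt' n (l - 1))
      = (fun l : ℤ => l - 1) ⁻¹' Function.support (gt' n) := rfl
  rw [heq]
  exact (gt'_supp n hn).preimage (fun a _ b _ h => by omega)

lemma shift_sum (n : ℤ) : (∑ᶠ l : ℤ, gt' n (l - 1)) = ∑ᶠ l : ℤ, gt' n l := by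
  simpa [Equiv.subRight] using finsum_comp_equiv (Equiv.subRight (1:ℤ)) (f := gt' n)

lemma R_step (n : ℤ) (hn : 0 ≤ n) : R (n+1) = R n := by
  have hR : ∀ m : ℤ, R m = ∑ᶠ l, tm m l := fun m => rfl
  rw [hR, hR]
  calc ∑ᶠ l, tm (n+1) l = ∑ᶠ l, (tm n l + (gt' n l - gt' n (l-1))) :=
        finsum_congr (key n hn)
    _ = (∑ᶠ l, tm n l) + ∑ᶠ l, (gt' n l - gt' n (l-1)) := by
        apply finsum_add_distrib (tm_supp n hn)
        apply Set.Finite.subset ((gt'_supp n hn).union (gt'_shift_supp n hn))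
        intro l hl
        simp only [Function.mem_support] at hl
        by_contra hc
        simp only [Set.mem_union, Function.mem_support, not_or, not_not] at hc
        exact hl (by rw [hc.1, hc.2]; ring)
    _ = (∑ᶠ l, tm n l) + ((∑ᶠ l, gt' n l) - ∑ᶠ l, gt' n (l-1)) := by
        rw [finsum_sub_distrib (gt'_supp n hn) (gt'_shift_supp n hn)]
    _ = ∑ᶠ l, tm n l := by
        rw [shift_sum n]; ring

lemma R_zero : R 0 = 1 := by
  have hR : R 0 = ∑ᶠ l, tm 0 l := rfl
  rw [hR, finsum_eq_single _ 0]
  · unfold tm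
    norm_num
    rw [show c 0 = 0 from rfl]
    norm_num [gb_zero le_rfl]
  · intro l hl
    unfold tm
    rw [gb_out, mul_zero]
    rw [fd2]
    omega

end Slalom

theorem slalom_pro (n : ℤ) (hn : 0 ≤ n) : R n = 1 := by
  obtain ⟨t, rfl⟩ : ∃ t : ℕ, n = t := ⟨n.toNat, by omega⟩
  clear hn
  induction t with
  | zero => exact Slalom.R_zero
  | succ s ih =>
      rw [show ((s + 1 : ℕ) : ℤ) = (s : ℤ) + 1 by push_cast; ring,
        Slalom.R_step s (by positivity)]
      exact ih
end
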